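/- Let N ≥ 2, let A ∈ ℂ^{N,N}, let λ₁, λ_N > 0 be real numbers, and let u₁, u_N ∈ ℂ^N be orthogonal unit vectors with A u₁ = λ₁ u₁ and A u_N = λ_N u_N. Then the vector w := √(λ_N)·u₁ + √(λ₁)·u_N satisfies w ≠ 0, Aw ≠ 0 and Re⟨w,Aw⟩/(|w||Aw|) = 2·√(λ₁·λ_N)/(λ₁ + λ_N). -/

import Mathlib

/-!
In the orthonormal pair `u₁, u_N` the vector `w` has coordinates `(√λ_N, √λ₁)` and `Aw` has
coordinates `(λ₁√λ_N, λ_N√λ₁)`. Hence `⟨w, Aw⟩ = 2λ₁λ_N`, `|w|² = λ₁ + λ_N` and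
`|Aw|² = λ₁λ_N(λ₁ + λ_N)`, and the quotient simplifies to `2√(λ₁λ_N)/(λ₁ + λ_N)`.
-/

/-- The action of a complex `N × N` matrix on `EuclideanSpace ℂ (Fin N)`. -/
noncomputable def mulE {N : ℕ} (A : Matrix (Fin N) (Fin N) ℂ)
    (w : EuclideanSpace ℂ (Fin N)) : EuclideanSpace ℂ (Fin N) :=
  Matrix.toEuclideanLin A w

open RCLike

section Orthonormal

variable {𝕜 E : Type*} [RCLike 𝕜] [NormedAddCommGroup E] [InnerProductSpace 𝕜 E] {u v : E}

theorem inner_ofReal_smul_add_ofReal_smul (hu : ‖u‖ = 1) (hv : ‖v‖ = 1)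
    (huv : inner 𝕜 u v = 0) (a b c d : ℝ) :
    inner 𝕜 ((a : 𝕜) • u + (b : 𝕜) • v) ((c : 𝕜) • u + (d : 𝕜) • v) =
      ((a * c + b * d : ℝ) : 𝕜) := by
  have hvu : inner 𝕜 v u = 0 := by rw [← inner_conj_symm, huv, map_zero]
  simp only [inner_add_left, inner_add_right, inner_smul_left, inner_smul_right, huv, hvu,
    inner_self_eq_one_of_norm_eq_one hu, inner_self_eq_one_of_norm_eq_one hv, conj_ofReal]
  push_cast
  ring

theorem norm_ofReal_smul_add_ofReal_smul (hu : ‖u‖ = 1) (hv : ‖v‖ = 1)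
    (huv : inner 𝕜 u v = 0) (a b : ℝ) :
    ‖(a : 𝕜) • u + (b : 𝕜) • v‖ = √(a ^ 2 + b ^ 2) := by
  rw [norm_eq_sqrt_re_inner (𝕜 := 𝕜), inner_ofReal_smul_add_ofReal_smul hu hv huv, ofReal_re]
  ring_nf

variable {T : E →ₗ[𝕜] E} {lam mu : ℝ}

theorem apply_ofReal_smul_add_ofReal_smul (hTu : T u = (lam : 𝕜) • u)
    (hTv : T v = (mu : 𝕜) • v) (a b : ℝ) :
    T ((a : 𝕜) • u + (b : 𝕜) • v) = ((a * lam : ℝ) : 𝕜) • u + ((b * mu : ℝ) : 𝕜) • v := by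
  simp only [map_add, map_smul, hTu, hTv, smul_smul, ofReal_mul]

variable (hu : ‖u‖ = 1) (hv : ‖v‖ = 1) (huv : inner 𝕜 u v = 0)
  (hTu : T u = (lam : 𝕜) • u) (hTv : T v = (mu : 𝕜) • v) (hlam : 0 ≤ lam) (hmu : 0 ≤ mu)
include hu hv huv hlam hmu

theorem norm_sqrt_smul_add_sqrt_smul :
    ‖(√mu : 𝕜) • u + (√lam : 𝕜) • v‖ = √(lam + mu) := by
  rw [norm_ofReal_smul_add_ofReal_smul hu hv huv, Real.sq_sqrt hmu, Real.sq_sqrt hlam, add_comm]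

include hTu hTv

theorem inner_sqrt_smul_add_sqrt_smul_apply :
    inner 𝕜 ((√mu : 𝕜) • u + (√lam : 𝕜) • v) (T ((√mu : 𝕜) • u + (√lam : 𝕜) • v)) =
      ((2 * lam * mu : ℝ) : 𝕜) := by
  rw [apply_ofReal_smul_add_ofReal_smul hTu hTv, inner_ofReal_smul_add_ofReal_smul hu hv huv,
    ← mul_assoc, ← mul_assoc, Real.mul_self_sqrt hmu, Real.mul_self_sqrt hlam]
  ring_nf

theorem norm_apply_sqrt_smul_add_sqrt_smul :
    ‖T ((√mu : 𝕜) • u + (√lam : 𝕜) • v)‖ = √(lam * mu * (lam + mu)) := by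
  rw [apply_ofReal_smul_add_ofReal_smul hTu hTv, norm_ofReal_smul_add_ofReal_smul hu hv huv,
    mul_pow, mul_pow, Real.sq_sqrt hmu, Real.sq_sqrt hlam]
  ring_nf

end Orthonormal

theorem two_mul_mul_div_sqrt_mul_sqrt {lam mu : ℝ} (hlam : 0 < lam) (hmu : 0 < mu) :
    2 * lam * mu / (√(lam + mu) * √(lam * mu * (lam + mu))) = 2 * √(lam * mu) / (lam + mu) := by
  have hden : √(lam + mu) * √(lam * mu * (lam + mu)) = (lam + mu) * √(lam * mu) := by
    rw [Real.sqrt_mul (by positivity) (lam + mu), mul_comm (√(lam * mu)), ← mul_assoc,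
      Real.mul_self_sqrt (by positivity)]
  have hs : √(lam * mu) * √(lam * mu) = lam * mu := Real.mul_self_sqrt (by positivity)
  rw [hden, div_eq_div_iff (by positivity) (by positivity)]
  linear_combination (-2) * (lam + mu) * hs

theorem stmt_16_general {N : ℕ} (A : Matrix (Fin N) (Fin N) ℂ)
    (lam1 lamN : ℝ) (hlam1 : 0 < lam1) (hlamN : 0 < lamN)
    (u1 uN : EuclideanSpace ℂ (Fin N)) (hu1 : ‖u1‖ = 1) (huN : ‖uN‖ = 1)
    (horth : (inner ℂ u1 uN : ℂ) = 0)
    (hAu1 : mulE A u1 = (lam1 : ℂ) • u1) (hAuN : mulE A uN = (lamN : ℂ) • uN) :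
    (Real.sqrt lamN : ℂ) • u1 + (Real.sqrt lam1 : ℂ) • uN ≠ 0 ∧
    mulE A ((Real.sqrt lamN : ℂ) • u1 + (Real.sqrt lam1 : ℂ) • uN) ≠ 0 ∧
    (inner ℂ ((Real.sqrt lamN : ℂ) • u1 + (Real.sqrt lam1 : ℂ) • uN)
        (mulE A ((Real.sqrt lamN : ℂ) • u1 + (Real.sqrt lam1 : ℂ) • uN)) : ℂ).re
      / (‖(Real.sqrt lamN : ℂ) • u1 + (Real.sqrt lam1 : ℂ) • uN‖
          * ‖mulE A ((Real.sqrt lamN : ℂ) • u1 + (Real.sqrt lam1 : ℂ) • uN)‖)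
      = 2 * Real.sqrt (lam1 * lamN) / (lam1 + lamN) := by
  unfold mulE at *
  have hw := norm_sqrt_smul_add_sqrt_smul hu1 huN horth hlam1.le hlamN.le
  have hAw := norm_apply_sqrt_smul_add_sqrt_smul hu1 huN horth hAu1 hAuN hlam1.le hlamN.le
  have hinner := inner_sqrt_smul_add_sqrt_smul_apply hu1 huN horth hAu1 hAuN hlam1.le hlamN.le
  -- the general lemmas coerce `ℝ → ℂ` through `RCLike.ofReal`, the statement through `Complex.ofReal`
  simp only [RCLike.ofReal_eq_complex_ofReal] at hw hAw hinner
  refine ⟨norm_ne_zero_iff.mp ?_, norm_ne_zero_iff.mp ?_, ?_⟩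
  · rw [hw]; positivity
  · rw [hAw]; positivity
  · rw [hinner, hw, hAw, Complex.ofReal_re, two_mul_mul_div_sqrt_mul_sqrt hlam1 hlamN]

/-- If `u₁, u_N` are orthogonal unit eigenvectors of `A` for positive real eigenvalues
`λ₁, λ_N`, then `w := √λ_N·u₁ + √λ₁·u_N` satisfies `w ≠ 0`, `Aw ≠ 0` and
`Re⟨w,Aw⟩/(|w||Aw|) = 2√(λ₁λ_N)/(λ₁+λ_N)`. -/
theorem stmt_16 {N : ℕ} (hN : 2 ≤ N) (A : Matrix (Fin N) (Fin N) ℂ)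
    (lam1 lamN : ℝ) (hlam1 : 0 < lam1) (hlamN : 0 < lamN)
    (u1 uN : EuclideanSpace ℂ (Fin N)) (hu1 : ‖u1‖ = 1) (huN : ‖uN‖ = 1)
    (horth : (inner ℂ u1 uN : ℂ) = 0)
    (hAu1 : mulE A u1 = (lam1 : ℂ) • u1) (hAuN : mulE A uN = (lamN : ℂ) • uN) :
    (Real.sqrt lamN : ℂ) • u1 + (Real.sqrt lam1 : ℂ) • uN ≠ 0 ∧
    mulE A ((Real.sqrt lamN : ℂ) • u1 + (Real.sqrt lam1 : ℂ) • uN) ≠ 0 ∧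
    (inner ℂ ((Real.sqrt lamN : ℂ) • u1 + (Real.sqrt lam1 : ℂ) • uN)
        (mulE A ((Real.sqrt lamN : ℂ) • u1 + (Real.sqrt lam1 : ℂ) • uN)) : ℂ).re
      / (‖(Real.sqrt lamN : ℂ) • u1 + (Real.sqrt lam1 : ℂ) • uN‖
          * ‖mulE A ((Real.sqrt lamN : ℂ) • u1 + (Real.sqrt lam1 : ℂ) • uN)‖)
      = 2 * Real.sqrt (lam1 * lamN) / (lam1 + lamN) :=
  stmt_16_general A lam1 lamN hlam1 hlamN u1 uN hu1 huN horth hAu1 hAuN
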